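/- Right multiplication by y on normal forms in M is given by: for 0 ≤ k ≤ n, (xⁿyᵏ)·y = xⁿy^{k+1}; for 0 ≤ n < k and 0 ≤ j ≤ k, (xⁿyᵏxʲ)·y = xⁿyᵏx^{j−1} if j ≥ 1, and (xⁿyᵏ)·y = xⁿy^{k+1} if j = 0. -/

import Mathlib

/-- The formal inverse of a word over `{x, y}` (with `x = true`, `y = false`):
reverse the word and interchange the two letters. -/
def winv (w : FreeMonoid Bool) : FreeMonoid Bool :=
  FreeMonoid.ofList ((FreeMonoid.toList w).reverse.map Bool.not)

/-- The defining relations of the free monogenic inverse monoid. -/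
inductive FIMRel1 : FreeMonoid Bool → FreeMonoid Bool → Prop
  | idem (w : FreeMonoid Bool) : FIMRel1 (w * winv w * w) w
  | comm (w z : FreeMonoid Bool) :
      FIMRel1 (w * winv w * (z * winv z)) (z * winv z * (w * winv w))

/-- The free monogenic inverse monoid. -/
abbrev FIM1 := (conGen FIMRel1).Quotient

/-- The generator `x` of the free monogenic inverse monoid. -/
def mx : FIM1 := (conGen FIMRel1).mk' (FreeMonoid.of true)

/-- The (generalized) inverse `y` of the generator. -/
def my : FIM1 := (conGen FIMRel1).mk' (FreeMonoid.of false)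

lemma winv_mul (a b : FreeMonoid Bool) : winv (a * b) = winv b * winv a := by
  simp [winv, FreeMonoid.toList_mul]

lemma winv_pow_false (m : ℕ) : winv ((FreeMonoid.of false) ^ m) = (FreeMonoid.of true) ^ m := by
  induction m with
  | zero => rfl
  | succ n ih =>
    rw [pow_succ, winv_mul, ih,
      show winv (FreeMonoid.of false) = FreeMonoid.of true from rfl, ← pow_succ']

lemma fim_rel {a b : FreeMonoid Bool} (h : FIMRel1 a b) :
    (conGen FIMRel1).mk' a = (conGen FIMRel1).mk' b :=
  (Con.eq _).2 (ConGen.Rel.of _ _ h)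

/-- `y x y = y`. -/
lemma yxy : my * mx * my = my := by
  have := fim_rel (FIMRel1.idem (FreeMonoid.of false))
  simpa [my, mx, winv, ← map_mul] using this

/-- `(x y)` commutes with `y^m x^m`. -/
lemma xy_comm (m : ℕ) : (mx * my) * (my ^ m * mx ^ m) = (my ^ m * mx ^ m) * (mx * my) := by
  have := fim_rel (FIMRel1.comm (FreeMonoid.of true) ((FreeMonoid.of false) ^ m))
  rw [winv_pow_false, show winv (FreeMonoid.of true) = FreeMonoid.of false from rfl] at this
  simpa [mx, my, ← map_mul, ← map_pow, show ∀ (x : FreeMonoid Bool) (n : ℕ),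
    ((x ^ n : FreeMonoid Bool) : (conGen FIMRel1).Quotient) = (x : (conGen FIMRel1).Quotient) ^ n from
    fun x n => map_pow (conGen FIMRel1).mk' x n] using this

/-- Right multiplication by `y` on the normal forms of `M`. -/
theorem right_mul_y :
    (∀ n k : ℕ, k ≤ n → mx ^ n * my ^ k * my = mx ^ n * my ^ (k + 1)) ∧
    (∀ n k j : ℕ, n < k → 1 ≤ j → j ≤ k →
      mx ^ n * my ^ k * mx ^ j * my = mx ^ n * my ^ k * mx ^ (j - 1)) ∧
    (∀ n k : ℕ, n < k → mx ^ n * my ^ k * mx ^ 0 * my = mx ^ n * my ^ (k + 1)) := by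
  refine ⟨fun n k _ => by rw [pow_succ, mul_assoc], ?_, fun n k _ => by
    rw [pow_zero, mul_one, pow_succ, mul_assoc]⟩
  intro n k j hnk hj hjk
  obtain ⟨m, rfl⟩ : ∃ m, j = m + 1 := ⟨j - 1, (Nat.succ_pred_eq_of_pos hj).symm⟩
  obtain ⟨a, rfl⟩ : ∃ a, k = a + 1 + m := ⟨k - 1 - m, by omega⟩
  have key : my ^ (a + 1 + m) * mx ^ (m + 1) * my = my ^ (a + 1 + m) * mx ^ m := by
    calc my ^ (a + 1 + m) * mx ^ (m + 1) * my
        = my ^ a * (my * ((my ^ m * mx ^ m) * (mx * my))) := by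
          simp only [pow_add, pow_succ, pow_one, mul_assoc]
      _ = my ^ a * (my * ((mx * my) * (my ^ m * mx ^ m))) := by rw [← xy_comm]
      _ = my ^ a * ((my * mx * my) * (my ^ m * mx ^ m)) := by simp only [mul_assoc]
      _ = my ^ a * (my * (my ^ m * mx ^ m)) := by rw [yxy]
      _ = my ^ (a + 1 + m) * mx ^ m := by simp only [pow_add, pow_one, mul_assoc]
  simp only [Nat.add_sub_cancel]
  rw [mul_assoc, mul_assoc, ← mul_assoc (my ^ (a+1+m)), key, mul_assoc]
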